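/- arXiv:0803.1847 — 3 statements merged into one kernel-verified Lean document; each statement's English description precedes it below -/
import Mathlib

section
/- Let v be a smooth real-valued function on an open interval (a,b) satisfying (v')² + 2 v v'' = p(v) − ρ², where p(v) = 3v² + (2κ+4c)v + K and ρ v = B₁ with B₁ a constant and v nonvanishing on (a,b). Then there exists a constant C such that v·(v')² = v³ + (κ+2c)v² + K v + B₁²/v + C on (a,b). -/
theorem first_integral_two_component (a b κ c K B₁ : ℝ) (hab : a < b)
    (v ρ : ℝ → ℝ) (hv : ContDiffOn ℝ (⊤ : ℕ∞) v (Set.Ioo a b))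
    (hvne : ∀ x ∈ Set.Ioo a b, v x ≠ 0)
    (hρ : ∀ x ∈ Set.Ioo a b, ρ x * v x = B₁)
    (hode : ∀ x ∈ Set.Ioo a b,
      (deriv v x) ^ 2 + 2 * v x * deriv (deriv v) x =
        3 * v x ^ 2 + (2 * κ + 4 * c) * v x + K - ρ x ^ 2) :
    ∃ C : ℝ, ∀ x ∈ Set.Ioo a b,
      v x * (deriv v x) ^ 2 =
        v x ^ 3 + (κ + 2 * c) * v x ^ 2 + K * v x + B₁ ^ 2 / v x + C := by
  set s := Set.Ioo a b with hs
  have hso : IsOpen s := isOpen_Ioo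
  set g : ℝ → ℝ := fun x => v x * (deriv v x) ^ 2 -
      (v x ^ 3 + (κ + 2 * c) * v x ^ 2 + K * v x + B₁ ^ 2 / v x) with hg
  -- smoothness at each point
  have hca : ∀ x ∈ s, ContDiffAt ℝ (⊤ : ℕ∞) v x := fun x hx =>
    hv.contDiffAt (hso.mem_nhds hx)
  have hdv : ∀ x ∈ s, HasDerivAt v (deriv v x) x := fun x hx =>
    ((hca x hx).differentiableAt (by simp)).hasDerivAt
  have hdv' : ∀ x ∈ s, HasDerivAt (deriv v) (deriv (deriv v) x) x := by
    intro x hx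
    have h : ContDiffOn ℝ (⊤ : ℕ∞) (deriv v) s := hv.deriv_of_isOpen hso (by simp)
    exact (((h.contDiffAt (hso.mem_nhds hx)).differentiableAt (by simp))).hasDerivAt
  have key : ∀ x ∈ s, HasDerivAt g 0 x := by
    intro x hx
    have h1 := hdv x hx
    have h2 := hdv' x hx
    have hvx := hvne x hx
    have hρx : ρ x ^ 2 * v x ^ 2 = B₁ ^ 2 := by
      have h := hρ x hx
      calc ρ x ^ 2 * v x ^ 2 = (ρ x * v x) ^ 2 := by ring
        _ = B₁ ^ 2 := by rw [h]
    have hmain : HasDerivAt g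
        (deriv v x * (deriv v x) ^ 2 + v x * (2 * deriv v x * deriv (deriv v) x)
          - (3 * v x ^ 2 * deriv v x + (κ + 2 * c) * (2 * v x * deriv v x)
            + K * deriv v x + (0 * v x - B₁ ^ 2 * deriv v x) / v x ^ 2)) x := by
      apply HasDerivAt.sub
      · exact h1.mul ((h2.pow 2).congr_deriv (by ring))
      · have := (((h1.pow 3).add ((h1.pow 2).const_mul (κ + 2 * c))).add (h1.const_mul K)).add
          ((hasDerivAt_const x (B₁ ^ 2)).div h1 hvx)
        convert this using 1
        · funext y; rfl
        push_cast
        ring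
    convert hmain using 1
    have hode' := hode x hx
    have hode2 : (deriv v x ^ 2 + 2 * v x * deriv (deriv v) x) * v x ^ 2 =
        (3 * v x ^ 2 + (2 * κ + 4 * c) * v x + K) * v x ^ 2 - B₁ ^ 2 := by
      rw [← hρx]; nlinarith [hode']
    have hv2 : v x ^ 2 ≠ 0 := pow_ne_zero 2 hvx
    field_simp
    linear_combination (-(deriv v x)) * hode2
  -- g is constant on s
  obtain ⟨x₀, hx₀⟩ : ∃ x₀, x₀ ∈ s := ⟨(a + b) / 2, by rw [hs, Set.mem_Ioo]; constructor <;> linarith⟩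
  refine ⟨g x₀, fun x hx => ?_⟩
  have hconst : g x = g x₀ := by
    have hconv : Convex ℝ s := convex_Ioo a b
    have hdiff : DifferentiableOn ℝ g s := fun y hy =>
      ((key y hy).differentiableAt).differentiableWithinAt
    have hfz : ∀ y ∈ s, fderivWithin ℝ g s y = 0 := by
      intro y hy
      rw [fderivWithin_of_isOpen hso hy]
      have := (key y hy).hasFDerivAt.fderiv
      rw [this]
      exact ContinuousLinearMap.ext fun t => by simp
    exact hconv.is_const_of_fderivWithin_eq_zero hdiff hfz hx hx₀
  have : g x = g x₀ := hconst
  simp only [hg] at this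
  linarith [this]
end

section
/- Let χ(ξ) = −(c+K₁)cosh(ξ) + K₁ with K₁ < 0 and c > |K₁| > 0, and let u(ξ) = χ(ξ) + √(χ(ξ)² − c²) (defined where χ² ≥ c²). Then u(0) = −c and the jump of the derivative of (u−c)² at 0 satisfies lim_{ξ↓0} ((u−c)²)'(ξ) − lim_{ξ↑0} ((u−c)²)'(ξ) = −8c√(c(c+K₁)); in particular (u−c)² is not continuously differentiable at 0. -/
/-!
Write `a = c + K₁ > 0`. Since `cosh ξ = 1 + 2 sinh² (ξ/2)`,
`χ² - c² = 2a sinh² (ξ/2) (a cosh ξ + c - K₁)`, so `√(χ² - c²) = |R|` for the smooth function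
`R ξ = √(2a) sinh (ξ/2) √(a cosh ξ + c - K₁)`, which has the sign of `ξ`. Hence on each side of `0`
the function `(u - c)²` agrees with a smooth function `(χ ± R - c)²`, and the one-sided limits of its
derivative are the derivatives of these at `0`. As `χ 0 = -c`, `χ' 0 = 0`, `R 0 = 0` and
`R' 0 = √(c a)`, these are `∓ 4c √(c a)`, which differ.
-/

open Real Filter Set Topology

section DerivLimits

variable {F : Type*} [NormedAddCommGroup F] [NormedSpace ℝ F]

lemma tendsto_deriv_nhdsWithin_of_eqOn {f g : ℝ → F} {s : Set ℝ} (hs : IsOpen s)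
    (hfg : EqOn f g s) (hg : ContDiff ℝ 1 g) (x : ℝ) :
    Tendsto (deriv f) (𝓝[s] x) (𝓝 (deriv g x)) := by
  have hderiv : deriv g =ᶠ[𝓝[s] x] deriv f :=
    eventually_nhdsWithin_of_forall fun y hy =>
      (hfg.eventuallyEq_of_mem (hs.mem_nhds hy)).deriv_eq.symm
  exact ((hg.continuous_deriv le_rfl).tendsto x |>.mono_left nhdsWithin_le_nhds).congr' hderiv

lemma ContDiffAt.continuousAt_deriv {f : ℝ → F} {x : ℝ} (hf : ContDiffAt ℝ 1 f x) :
    ContinuousAt (deriv f) x :=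
  (hf.continuousAt_fderiv one_ne_zero).clm_apply continuousAt_const

lemma not_contDiffAt_one_of_tendsto_deriv {f : ℝ → F} {x : ℝ} {Lp Lm : F}
    (hp : Tendsto (deriv f) (𝓝[>] x) (𝓝 Lp)) (hm : Tendsto (deriv f) (𝓝[<] x) (𝓝 Lm))
    (hne : Lp ≠ Lm) : ¬ ContDiffAt ℝ 1 f x := fun hf =>
  have hcont := hf.continuousAt_deriv.tendsto
  hne <| (tendsto_nhds_unique hp (hcont.mono_left nhdsWithin_le_nhds)).trans
    (tendsto_nhds_unique hm (hcont.mono_left nhdsWithin_le_nhds)).symm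

end DerivLimits

namespace Peakon

variable (c K₁ : ℝ)

noncomputable def chi (ξ : ℝ) : ℝ := -(c + K₁) * cosh ξ + K₁

noncomputable def profile (ξ : ℝ) : ℝ := chi c K₁ ξ + √(chi c K₁ ξ ^ 2 - c ^ 2)

noncomputable def signedRoot (ξ : ℝ) : ℝ :=
  √(2 * (c + K₁)) * sinh (ξ / 2) * √((c + K₁) * cosh ξ + (c - K₁))

noncomputable def branch (σ ξ : ℝ) : ℝ := (chi c K₁ ξ + σ * signedRoot c K₁ ξ - c) ^ 2

lemma chi_sq_sub_sq (ξ : ℝ) :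
    chi c K₁ ξ ^ 2 - c ^ 2 = 2 * (c + K₁) * sinh (ξ / 2) ^ 2 * ((c + K₁) * cosh ξ + (c - K₁)) := by
  have hcosh : cosh ξ = 1 + 2 * sinh (ξ / 2) ^ 2 := by
    have h := cosh_two_mul (ξ / 2)
    rw [show 2 * (ξ / 2) = ξ by ring, cosh_sq] at h
    linarith
  rw [chi, hcosh]
  ring

variable {c K₁}

lemma chi_zero : chi c K₁ 0 = -c := by
  simp [chi]

lemma profile_zero : profile c K₁ 0 = -c := by
  simp [profile, chi_zero]

lemma signedRoot_zero : signedRoot c K₁ 0 = 0 := by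
  simp [signedRoot]

lemma radicand_pos (ha : 0 ≤ c + K₁) (hc : 0 < c) (ξ : ℝ) :
    0 < (c + K₁) * cosh ξ + (c - K₁) := by
  nlinarith [one_le_cosh ξ]

lemma sqrt_chi_sq_sub_sq (ha : 0 ≤ c + K₁) (hc : 0 < c) (ξ : ℝ) :
    √(chi c K₁ ξ ^ 2 - c ^ 2) = |signedRoot c K₁ ξ| := by
  rw [← sqrt_sq_eq_abs, signedRoot, mul_pow, mul_pow, sq_sqrt (by positivity),
    sq_sqrt (radicand_pos ha hc ξ).le, chi_sq_sub_sq]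

lemma signedRoot_nonneg {ξ : ℝ} (hξ : 0 < ξ) : 0 ≤ signedRoot c K₁ ξ := by
  have := sinh_pos_iff.2 (half_pos hξ)
  unfold signedRoot
  positivity

lemma signedRoot_nonpos {ξ : ℝ} (hξ : ξ < 0) : signedRoot c K₁ ξ ≤ 0 :=
  mul_nonpos_of_nonpos_of_nonneg
    (mul_nonpos_of_nonneg_of_nonpos (sqrt_nonneg _) (sinh_nonpos_iff.2 (by linarith)))
    (sqrt_nonneg _)

lemma profile_eqOn_Ioi (ha : 0 ≤ c + K₁) (hc : 0 < c) :
    EqOn (fun ξ => (profile c K₁ ξ - c) ^ 2) (branch c K₁ 1) (Ioi 0) := fun ξ hξ => by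
  simp only [profile, branch, sqrt_chi_sq_sub_sq ha hc, abs_of_nonneg (signedRoot_nonneg hξ),
    one_mul]

lemma profile_eqOn_Iio (ha : 0 ≤ c + K₁) (hc : 0 < c) :
    EqOn (fun ξ => (profile c K₁ ξ - c) ^ 2) (branch c K₁ (-1)) (Iio 0) := fun ξ hξ => by
  simp only [profile, branch, sqrt_chi_sq_sub_sq ha hc, abs_of_nonpos (signedRoot_nonpos hξ),
    neg_one_mul]

lemma contDiff_chi {n : WithTop ℕ∞} : ContDiff ℝ n (chi c K₁) := by
  unfold chi
  fun_prop

lemma contDiff_signedRoot (ha : 0 ≤ c + K₁) (hc : 0 < c) {n : WithTop ℕ∞} :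
    ContDiff ℝ n (signedRoot c K₁) := by
  have hsqrt : ContDiff ℝ n fun ξ => √((c + K₁) * cosh ξ + (c - K₁)) :=
    ContDiff.sqrt (by fun_prop) fun ξ => (radicand_pos ha hc ξ).ne'
  unfold signedRoot
  fun_prop

lemma contDiff_branch (ha : 0 ≤ c + K₁) (hc : 0 < c) (σ : ℝ) :
    ContDiff ℝ 1 (branch c K₁ σ) := by
  have := contDiff_chi (c := c) (K₁ := K₁) (n := 1)
  have := contDiff_signedRoot ha hc (n := 1)
  unfold branch
  fun_prop

lemma hasDerivAt_chi_zero : HasDerivAt (chi c K₁) 0 0 := by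
  have h := ((hasDerivAt_cosh 0).const_mul (-(c + K₁))).add_const K₁
  rwa [sinh_zero, mul_zero] at h

lemma hasDerivAt_signedRoot_zero (ha : 0 ≤ c + K₁) (hc : 0 < c) :
    HasDerivAt (signedRoot c K₁) √(c * (c + K₁)) 0 := by
  have hsinh : HasDerivAt (fun ξ => sinh (ξ / 2)) (1 / 2) 0 := by
    simpa using ((hasDerivAt_id (0 : ℝ)).div_const 2).sinh
  have hsqrt : HasDerivAt (fun ξ => √((c + K₁) * cosh ξ + (c - K₁))) _ 0 :=
    ((hasDerivAt_cosh 0).const_mul (c + K₁)).add_const (c - K₁) |>.sqrt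
      (radicand_pos ha hc 0).ne'
  refine ((hsinh.const_mul √(2 * (c + K₁))).fun_mul hsqrt).congr_deriv ?_
  have h2c : (c + K₁) * 1 + (c - K₁) = 2 * c := by ring
  simp only [cosh_zero, sinh_zero, zero_div, mul_zero, add_zero, h2c]
  rw [mul_right_comm, ← sqrt_mul (by positivity),
    show 2 * (c + K₁) * (2 * c) = 2 ^ 2 * (c * (c + K₁)) by ring, sqrt_mul (by positivity),
    sqrt_sq zero_le_two]
  ring

lemma deriv_branch_zero (ha : 0 ≤ c + K₁) (hc : 0 < c) (σ : ℝ) :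
    deriv (branch c K₁ σ) 0 = -4 * c * σ * √(c * (c + K₁)) := by
  have h : HasDerivAt (branch c K₁ σ)
      (2 * (chi c K₁ 0 + σ * signedRoot c K₁ 0 - c) ^ (2 - 1) * (0 + σ * √(c * (c + K₁)))) 0 :=
    (((hasDerivAt_chi_zero (c := c) (K₁ := K₁)).fun_add
      ((hasDerivAt_signedRoot_zero ha hc).const_mul σ)).sub_const c).fun_pow 2
  rw [h.deriv, chi_zero, signedRoot_zero]
  ring

end Peakon

open Peakon in
theorem peaked_not_C1 (c K₁ : ℝ) (hK₁ : K₁ < 0) (hc : -K₁ < c)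
    (χ u : ℝ → ℝ)
    (hχ : ∀ ξ : ℝ, χ ξ = -(c + K₁) * Real.cosh ξ + K₁)
    (hu : ∀ ξ : ℝ, u ξ = χ ξ + Real.sqrt (χ ξ ^ 2 - c ^ 2)) :
    u 0 = -c ∧
      ∃ Lp Lm : ℝ,
        Filter.Tendsto (deriv (fun ξ => (u ξ - c) ^ 2))
          (nhdsWithin 0 (Set.Ioi 0)) (nhds Lp) ∧
        Filter.Tendsto (deriv (fun ξ => (u ξ - c) ^ 2))
          (nhdsWithin 0 (Set.Iio 0)) (nhds Lm) ∧
        Lp - Lm = -8 * c * Real.sqrt (c * (c + K₁)) ∧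
        ¬ ContDiffAt ℝ 1 (fun ξ => (u ξ - c) ^ 2) 0 := by
  have ha : 0 < c + K₁ := by linarith
  have hc₀ : 0 < c := by linarith
  obtain rfl : χ = chi c K₁ := funext hχ
  obtain rfl : u = profile c K₁ := funext hu
  have hp := tendsto_deriv_nhdsWithin_of_eqOn isOpen_Ioi (profile_eqOn_Ioi ha.le hc₀)
    (contDiff_branch ha.le hc₀ 1) 0
  have hm := tendsto_deriv_nhdsWithin_of_eqOn isOpen_Iio (profile_eqOn_Iio ha.le hc₀)
    (contDiff_branch ha.le hc₀ (-1)) 0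
  rw [deriv_branch_zero ha.le hc₀] at hp hm
  have hroot : 0 < √(c * (c + K₁)) := sqrt_pos.2 (mul_pos hc₀ ha)
  refine ⟨profile_zero, _, _, hp, hm, by ring, not_contDiffAt_one_of_tendsto_deriv hp hm ?_⟩
  nlinarith
end

section
/- For the peaked function of Chen–Liu–Zhang: with χ(ξ) = −(c+K₁)cosh ξ + K₁, K₁ < 0, c > |K₁|, and u = χ + √(χ²−c²), one has (u(ξ)−c)² = (χ(ξ)−c)² + (χ(ξ)²−c²) + 2(χ(ξ)−c)√(χ(ξ)²−c²), and its derivative for ξ > 0 tends, as ξ ↓ 0, to −4c√(c(c+K₁)) (while for ξ < 0 as ξ ↑ 0 it tends to +4c√(c(c+K₁))). -/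
/-!
With `s = sinh (|ξ| / 2)` one has `cosh ξ = 1 + 2 s²`, hence `χ + c = -2 (c + K₁) s²` and
`χ² - c² = (2 s)² (c + (c + K₁) s²) (c + K₁)`. Since `s ≥ 0`, the square root can be taken
termwise, and `u ξ - c = P |ξ|` with `P = peakProfile c (c + K₁)`, which is smooth on all
of `ℝ`: the radicand `(c + (c + K₁) s²) (c + K₁)` stays above `c (c + K₁) > 0`. So the only
non-smoothness of `(u - c)²` at `0` is the corner of `|ξ|`, and the one-sided limits of its
derivative are `± (P²)'(0) = ± 2 P(0) P'(0) = ∓ 4 c √(c (c + K₁))`.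
-/

open Real Filter Topology

section AbsComposition

variable {E : Type*} [NormedAddCommGroup E] [NormedSpace ℝ E] {P : ℝ → E}

theorem tendsto_deriv_comp_abs_nhdsGT_zero (hP : ContinuousAt (deriv P) 0) :
    Tendsto (deriv fun x => P |x|) (𝓝[>] 0) (𝓝 (deriv P 0)) := by
  refine (hP.tendsto.mono_left nhdsWithin_le_nhds).congr' ?_
  filter_upwards [self_mem_nhdsWithin] with x hx
  refine (EventuallyEq.deriv_eq ?_).symm
  filter_upwards [Ioi_mem_nhds hx] with y hy
  rw [abs_of_pos hy]

theorem tendsto_deriv_comp_abs_nhdsLT_zero (hP : ContinuousAt (deriv P) 0) :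
    Tendsto (deriv fun x => P |x|) (𝓝[<] 0) (𝓝 (-deriv P 0)) := by
  have hneg : Tendsto (fun x => -deriv P (-x)) (𝓝 0) (𝓝 (-deriv P 0)) := by
    simpa using (hP.comp_of_eq continuous_neg.continuousAt neg_zero).tendsto.neg
  refine (hneg.mono_left nhdsWithin_le_nhds).congr' ?_
  filter_upwards [self_mem_nhdsWithin] with x hx
  rw [← deriv_comp_neg]
  refine (EventuallyEq.deriv_eq ?_).symm
  filter_upwards [Iio_mem_nhds hx] with y hy
  rw [abs_of_neg hy]

end AbsComposition

noncomputable def peakProfile (c a t : ℝ) : ℝ :=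
  2 * sinh (t / 2) * √((c + a * sinh (t / 2) ^ 2) * a) - 2 * (c + a * sinh (t / 2) ^ 2)

section Profile

variable {c a : ℝ}

theorem contDiff_peakProfile (hc : 0 < c) (ha : 0 < a) : ContDiff ℝ 1 (peakProfile c a) := by
  unfold peakProfile
  have : ∀ t, (c + a * sinh (t / 2) ^ 2) * a ≠ 0 := fun t => by positivity
  fun_prop (disch := exact this _)

theorem hasDerivAt_peakProfile_zero (hca : c * a ≠ 0) :
    HasDerivAt (peakProfile c a) √(c * a) 0 := by
  have hs : HasDerivAt (fun t => sinh (t / 2)) (1 / 2) 0 := by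
    simpa using ((hasDerivAt_id (0 : ℝ)).div_const 2).sinh
  have hw := ((hs.fun_pow 2).const_mul a).const_add c
  have hr := (hw.mul_const a).sqrt (by simpa using hca)
  refine (((hs.const_mul 2).mul hr).sub (hw.const_mul 2)).congr_deriv ?_
  simp

theorem peakProfile_zero : peakProfile c a 0 = -2 * c := by
  simp [peakProfile]

end Profile

theorem cosh_eq_one_add_two_mul_sinh_abs_half_sq (x : ℝ) :
    cosh x = 1 + 2 * sinh (|x| / 2) ^ 2 := by
  have h := cosh_two_mul (|x| / 2)
  rw [mul_div_cancel₀ _ two_ne_zero, cosh_abs, cosh_sq'] at h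
  linarith

section PeakedWave

variable {c K ξ χ : ℝ}

theorem peak_sq_sub_sq_eq (hχ : χ = -(c + K) * cosh ξ + K) :
    χ ^ 2 - c ^ 2 =
      (2 * sinh (|ξ| / 2)) ^ 2 * ((c + (c + K) * sinh (|ξ| / 2) ^ 2) * (c + K)) := by
  rw [hχ, cosh_eq_one_add_two_mul_sinh_abs_half_sq]
  ring

theorem peak_add_sqrt_sub_eq_peakProfile (hχ : χ = -(c + K) * cosh ξ + K) :
    χ + √(χ ^ 2 - c ^ 2) - c = peakProfile c (c + K) |ξ| := by
  have hs : 0 ≤ 2 * sinh (|ξ| / 2) := by have := abs_nonneg ξ; positivity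
  rw [peak_sq_sub_sq_eq hχ, sqrt_mul (sq_nonneg _), sqrt_sq hs, peakProfile, hχ,
    cosh_eq_one_add_two_mul_sinh_abs_half_sq]
  ring

end PeakedWave

theorem peaked_expansion_and_limits (c K₁ : ℝ) (hK₁ : K₁ < 0) (hc : -K₁ < c)
    (χ u : ℝ → ℝ)
    (hχ : ∀ ξ : ℝ, χ ξ = -(c + K₁) * Real.cosh ξ + K₁)
    (hu : ∀ ξ : ℝ, u ξ = χ ξ + Real.sqrt (χ ξ ^ 2 - c ^ 2)) :
    (∀ ξ : ℝ, (u ξ - c) ^ 2 =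
        (χ ξ - c) ^ 2 + (χ ξ ^ 2 - c ^ 2) +
          2 * (χ ξ - c) * Real.sqrt (χ ξ ^ 2 - c ^ 2)) ∧
      Filter.Tendsto (deriv (fun ξ => (u ξ - c) ^ 2))
        (nhdsWithin 0 (Set.Ioi 0))
        (nhds (-4 * c * Real.sqrt (c * (c + K₁)))) ∧
      Filter.Tendsto (deriv (fun ξ => (u ξ - c) ^ 2))
        (nhdsWithin 0 (Set.Iio 0))
        (nhds (4 * c * Real.sqrt (c * (c + K₁)))) := by
  have ha : 0 < c + K₁ := by linarith
  have hc₀ : 0 < c := by linarith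
  have hsq : (fun ξ => (u ξ - c) ^ 2) = fun ξ => peakProfile c (c + K₁) |ξ| ^ 2 := by
    funext ξ
    rw [hu, peak_add_sqrt_sub_eq_peakProfile (hχ ξ)]
  have hcont : ContinuousAt (deriv fun t => peakProfile c (c + K₁) t ^ 2) 0 :=
    (((contDiff_peakProfile hc₀ ha).pow 2).continuous_deriv le_rfl).continuousAt
  have hderiv : deriv (fun t => peakProfile c (c + K₁) t ^ 2) 0 =
      -4 * c * √(c * (c + K₁)) := by
    rw [((hasDerivAt_peakProfile_zero (mul_pos hc₀ ha).ne').fun_pow 2).deriv, peakProfile_zero]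
    ring
  refine ⟨fun ξ => ?_, ?_, ?_⟩
  · have hq : 0 ≤ χ ξ ^ 2 - c ^ 2 := by rw [peak_sq_sub_sq_eq (hχ ξ)]; positivity
    rw [hu]
    linear_combination sq_sqrt hq
  · rw [hsq, ← hderiv]
    exact tendsto_deriv_comp_abs_nhdsGT_zero hcont
  · rw [hsq, show 4 * c * √(c * (c + K₁)) = -(-4 * c * √(c * (c + K₁))) by ring, ← hderiv]
    exact tendsto_deriv_comp_abs_nhdsLT_zero hcont
end
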